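/- arXiv:2411.17419 — 2 statements merged into one kernel-verified Lean document; each statement's English description precedes it below -/
import Mathlib

section
/- Let α_R, α_F ∈ [0,1), let R be the real 2×2 matrix with rows (1, −α_R) and (−α_F, 1), let T_D : ℝ ⇒ ℝ be a monotone set-valued operator, and define T_NPN : ℝ² ⇒ ℝ² by T_NPN(v₁,v₂) := {R·(u₁,u₂) : u₁ ∈ T_D(v₁), u₂ ∈ T_D(v₂)}. Then for every ρ < 0, the operator T_NPN is (1/(8ρ), ρ)-semimonotone: ⟨x − y, u − v⟩ ≥ (1/(8ρ))·‖x − y‖² + ρ·‖u − v‖² for all (x,u), (y,v) in the graph of T_NPN. -/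
/-- The Ebers–Moll matrix with rows `(1, -αR)` and `(-αF, 1)`, applied to a vector of
`ℝ²` (with the Euclidean inner product and norm). -/
noncomputable def applyEM (aR aF : ℝ) (w : EuclideanSpace ℝ (Fin 2)) :
    EuclideanSpace ℝ (Fin 2) :=
  (WithLp.equiv 2 (Fin 2 → ℝ)).symm
    ((Matrix.of ![![1, -aR], ![-aF, 1]]).mulVec (WithLp.equiv 2 (Fin 2 → ℝ) w))

/-- A set-valued operator `T_D : ℝ ⇒ ℝ` is monotone if `(u - v)(x - y) ≥ 0` whenever
`u ∈ T_D(x)` and `v ∈ T_D(y)`. -/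
def MonotoneSetValued (TD : ℝ → Set ℝ) : Prop :=
  ∀ ⦃x u y v : ℝ⦄, u ∈ TD x → v ∈ TD y → (u - v) * (x - y) ≥ 0

/-- The Ebers–Moll transistor operator `T_NPN : ℝ² ⇒ ℝ²` built from the diode law `T_D`. -/
noncomputable def TNPN (aR aF : ℝ) (TD : ℝ → Set ℝ) (v : EuclideanSpace ℝ (Fin 2)) :
    Set (EuclideanSpace ℝ (Fin 2)) :=
  {w | ∃ u₁ ∈ TD (v 0), ∃ u₂ ∈ TD (v 1),
    w = applyEM aR aF ((WithLp.equiv 2 (Fin 2 → ℝ)).symm ![u₁, u₂])}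

/-!
Write `d = x - y` and `z = (u₁ - v₁, u₂ - v₂)`, so that `u - v = R z`. Monotonicity of `T_D` puts
`d` and `z` in a common closed quadrant. If that quadrant is the second or fourth one, then
`⟪d, R z⟫ ≥ 0` and there is nothing to prove. In the first quadrant, `R z` lies in the half-plane
`w₁ + w₂ ≥ 0` because `αR, αF ≤ 1`, so `d` and `R z` make an angle of at most `3π/4`, which is what
the constant `1/(8ρ)` needs; algebraically, the gap times `-8ρ` is a sum of squares and of products
of nonnegative quantities. The third quadrant is the first one with every sign flipped.
-/

lemma le_mul_add_mul_of_nonneg_of_add_nonneg {ρ a b w₁ w₂ : ℝ} (hρ : ρ < 0) (ha : 0 ≤ a)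
    (hb : 0 ≤ b) (hw : 0 ≤ w₁ + w₂) :
    1 / (8 * ρ) * (a ^ 2 + b ^ 2) + ρ * (w₁ ^ 2 + w₂ ^ 2) ≤ a * w₁ + b * w₂ := by
  have h8ρ : 8 * ρ < 0 := by linarith
  have hsos : (a ^ 2 + b ^ 2) + 8 * ρ ^ 2 * (w₁ ^ 2 + w₂ ^ 2) - 8 * ρ * (a * w₁ + b * w₂) =
      (a - b - 2 * ρ * (w₁ - w₂)) ^ 2 + 4 * ρ ^ 2 * (w₁ + w₂) ^ 2
        + 4 * (-ρ) * (a + b) * (w₁ + w₂) + 2 * a * b := by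
    ring
  have hgap : 0 ≤ (a ^ 2 + b ^ 2) + 8 * ρ ^ 2 * (w₁ ^ 2 + w₂ ^ 2) - 8 * ρ * (a * w₁ + b * w₂) := by
    rw [hsos]
    have : 0 ≤ -ρ := by linarith
    positivity
  calc 1 / (8 * ρ) * (a ^ 2 + b ^ 2) + ρ * (w₁ ^ 2 + w₂ ^ 2)
      = ((a ^ 2 + b ^ 2) + 8 * ρ ^ 2 * (w₁ ^ 2 + w₂ ^ 2)) / (8 * ρ) := by
        field_simp
    _ ≤ a * w₁ + b * w₂ := by
        rw [div_le_iff_of_neg h8ρ]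
        linarith

lemma le_mul_add_mul_ebersMoll {α β ρ a b p q : ℝ} (hα : α ∈ Set.Icc (0 : ℝ) 1)
    (hβ : β ∈ Set.Icc (0 : ℝ) 1) (hρ : ρ < 0) (hpa : 0 ≤ p * a) (hqb : 0 ≤ q * b) :
    1 / (8 * ρ) * (a ^ 2 + b ^ 2) + ρ * ((p - α * q) ^ 2 + (q - β * p) ^ 2) ≤
      a * (p - α * q) + b * (q - β * p) := by
  obtain ⟨hα₀, hα₁⟩ := hα
  obtain ⟨hβ₀, hβ₁⟩ := hβ
  have hnonpos : 1 / (8 * ρ) * (a ^ 2 + b ^ 2) + ρ * ((p - α * q) ^ 2 + (q - β * p) ^ 2) ≤ 0 := by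
    have : 1 / (8 * ρ) < 0 := by rw [one_div_neg]; linarith
    nlinarith [sq_nonneg a, sq_nonneg b, sq_nonneg (p - α * q), sq_nonneg (q - β * p)]
  rcases mul_nonneg_iff.1 hpa with ⟨hp, ha⟩ | ⟨hp, ha⟩ <;>
    rcases mul_nonneg_iff.1 hqb with ⟨hq, hb⟩ | ⟨hq, hb⟩
  · exact le_mul_add_mul_of_nonneg_of_add_nonneg hρ ha hb (by nlinarith)
  · exact hnonpos.trans <| add_nonneg (mul_nonneg ha (by nlinarith))
      (mul_nonneg_of_nonpos_of_nonpos hb (by nlinarith))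
  · exact hnonpos.trans <| add_nonneg (mul_nonneg_of_nonpos_of_nonpos ha (by nlinarith))
      (mul_nonneg hb (by nlinarith))
  · simpa only [neg_sq, neg_mul_neg] using
      le_mul_add_mul_of_nonneg_of_add_nonneg (w₁ := -(p - α * q)) (w₂ := -(q - β * p)) hρ
        (neg_nonneg.2 ha) (neg_nonneg.2 hb) (by nlinarith)

lemma EuclideanSpace.real_inner_fin_two (x y : EuclideanSpace ℝ (Fin 2)) :
    inner ℝ x y = x 0 * y 0 + x 1 * y 1 := by
  simp [PiLp.inner_apply, Fin.sum_univ_two, mul_comm]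

lemma EuclideanSpace.real_norm_sq_fin_two (x : EuclideanSpace ℝ (Fin 2)) :
    ‖x‖ ^ 2 = x 0 ^ 2 + x 1 ^ 2 := by
  simp [EuclideanSpace.real_norm_sq_eq, Fin.sum_univ_two]

lemma applyEM_apply_zero (aR aF u₁ u₂ : ℝ) :
    applyEM aR aF ((WithLp.equiv 2 (Fin 2 → ℝ)).symm ![u₁, u₂]) 0 = u₁ - aR * u₂ := by
  simp [applyEM, sub_eq_add_neg, mul_comm]

lemma applyEM_apply_one (aR aF u₁ u₂ : ℝ) :
    applyEM aR aF ((WithLp.equiv 2 (Fin 2 → ℝ)).symm ![u₁, u₂]) 1 = u₂ - aF * u₁ := by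
  simp [applyEM, sub_eq_add_neg, mul_comm, add_comm]

theorem stmt_14 (aR aF : ℝ) (haR : aR ∈ Set.Ico (0 : ℝ) 1) (haF : aF ∈ Set.Ico (0 : ℝ) 1)
    (TD : ℝ → Set ℝ) (hTD : MonotoneSetValued TD) (ρ : ℝ) (hρ : ρ < 0) :
    ∀ ⦃x u y v : EuclideanSpace ℝ (Fin 2)⦄, u ∈ TNPN aR aF TD x → v ∈ TNPN aR aF TD y →
      (inner ℝ (x - y) (u - v) : ℝ) ≥ 1 / (8 * ρ) * ‖x - y‖ ^ 2 + ρ * ‖u - v‖ ^ 2 := by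
  rintro x u y v ⟨u₁, hu₁, u₂, hu₂, rfl⟩ ⟨v₁, hv₁, v₂, hv₂, rfl⟩
  have key := le_mul_add_mul_ebersMoll (Set.Ico_subset_Icc_self haR)
    (Set.Ico_subset_Icc_self haF) hρ (hTD hu₁ hv₁) (hTD hu₂ hv₂)
  rw [ge_iff_le, EuclideanSpace.real_inner_fin_two, EuclideanSpace.real_norm_sq_fin_two,
    EuclideanSpace.real_norm_sq_fin_two]
  simp only [PiLp.sub_apply, applyEM_apply_zero, applyEM_apply_one]
  convert key using 3 <;> ring
end

section
/- Let α_R, α_F ∈ [0,1), let R be the real 2×2 matrix with rows (1, −α_R) and (−α_F, 1), let T_D : ℝ ⇒ ℝ be a monotone set-valued operator, define T_NPN : ℝ² ⇒ ℝ² by T_NPN(v₁,v₂) := {R·(u₁,u₂) : u₁ ∈ T_D(v₁), u₂ ∈ T_D(v₂)}, and for r > 0 set T_{NPN,r} := T_NPN + (1/r)·id (graph {(v, w + (1/r)v) : (v,w) ∈ graph T_NPN}). Then T_{NPN,r} is (r(1 − √2)/2)-comonotone: ⟨x − y, u − v⟩ ≥ (r(1 − √2)/2)·‖u − v‖² for all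 (x,u), (y,v) in the graph of T_{NPN,r}. -/
/-- `T_NPN + (1/r)·id`, the transistor with leakage resistance `r`. -/
noncomputable def TNPNr (aR aF : ℝ) (TD : ℝ → Set ℝ) (r : ℝ)
    (v : EuclideanSpace ℝ (Fin 2)) : Set (EuclideanSpace ℝ (Fin 2)) :=
  (fun w => w + (1 / r) • v) '' TNPN aR aF TD v

/-! Put `d = x - y`, `c = u_D - v_D` (the difference of the diode currents) and `w = R c`, so that
`u - v = w + d / r`. Monotonicity of `T_D` gives `c i * d i ≥ 0`, so `c` and `d` lie in a common
closed quadrant `{s₀ z₀ ≥ 0, s₁ z₁ ≥ 0}`, and since `|α| ≤ 1` the matrix `R` maps that quadrant into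
the half-plane `s₀ w₀ + s₁ w₁ ≥ 0`. Hence the angle between `d` and `w` is at most `3π/4`, that is
`√2 ⟪d, w⟫ ≥ -‖d‖ ‖w‖`. For such vectors AM–GM with the weights `√2 ± 1` gives
`⟪d, w + d / r⟫ - r (1 - √2) / 2 ‖w + d / r‖² ≥ √2 ⟪d, w⟫ + ‖d‖ ‖w‖ ≥ 0`. -/

open scoped RealInnerProductSpace

theorem inner_add_smul_ge_of_neg_norm_mul_norm_le {E : Type*} [NormedAddCommGroup E]
    [InnerProductSpace ℝ E] {d w : E} {r : ℝ} (hr : 0 < r)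
    (h : -(‖d‖ * ‖w‖) ≤ √2 * ⟪d, w⟫) :
    ⟪d, w + (1 / r) • d⟫ ≥ r * (1 - √2) / 2 * ‖w + (1 / r) • d‖ ^ 2 := by
  have amgm : 2 * r * (‖d‖ * ‖w‖) ≤ (√2 + 1) * ‖d‖ ^ 2 + (√2 - 1) * r ^ 2 * ‖w‖ ^ 2 := by
    have := mul_nonneg (sub_nonneg.2 Real.one_lt_sqrt_two.le)
      (sq_nonneg ((√2 + 1) * ‖d‖ - r * ‖w‖))
    linear_combination this + ((√2 + 1) * ‖d‖ ^ 2 - 2 * r * (‖d‖ * ‖w‖)) *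
      Real.sq_sqrt zero_le_two
  have key : 0 ≤ 2 * r * (√2 * ⟪d, w⟫) + (√2 + 1) * ‖d‖ ^ 2 + (√2 - 1) * r ^ 2 * ‖w‖ ^ 2 := by
    nlinarith [mul_le_mul_of_nonneg_left h (by positivity : (0 : ℝ) ≤ 2 * r)]
  rw [ge_iff_le, ← sub_nonneg, norm_add_sq_real, inner_add_right, real_inner_smul_right,
    real_inner_smul_right, real_inner_self_eq_norm_sq, norm_smul, real_inner_comm d w,
    Real.norm_of_nonneg (by positivity)]
  refine (div_nonneg key (by positivity : (0 : ℝ) ≤ 2 * r)).trans_eq ?_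
  field_simp
  ring

theorem neg_abs_sub_le_add_of_nonneg {a₁ a₂ b₁ b₂ : ℝ} (ha₁ : 0 ≤ a₁) (ha₂ : 0 ≤ a₂)
    (hb : 0 ≤ b₁ + b₂) : -|a₁ * b₂ - a₂ * b₁| ≤ a₁ * b₁ + a₂ * b₂ := by
  rcases le_total b₁ b₂ with h | h
  · have := add_nonneg (mul_nonneg ha₁ hb) (mul_nonneg ha₂ (sub_nonneg.2 h))
    linarith [le_abs_self (a₁ * b₂ - a₂ * b₁)]
  · have := add_nonneg (mul_nonneg ha₁ (sub_nonneg.2 h)) (mul_nonneg ha₂ hb)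
    linarith [neg_abs_le (a₁ * b₂ - a₂ * b₁)]

theorem exists_abs_eq_one_mul_nonneg {c d : ℝ} (h : 0 ≤ c * d) :
    ∃ s : ℝ, |s| = 1 ∧ 0 ≤ s * c ∧ 0 ≤ s * d := by
  by_cases hcd : 0 ≤ c + d
  · exact ⟨1, abs_one, by nlinarith, by nlinarith⟩
  · exact ⟨-1, by simp, by nlinarith, by nlinarith⟩

namespace EuclideanSpace

variable (d w : EuclideanSpace ℝ (Fin 2))

theorem inner_fin_two : ⟪d, w⟫ = d 0 * w 0 + d 1 * w 1 := by
  simp [PiLp.inner_apply, Fin.sum_univ_two, mul_comm]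

theorem inner_sq_add_cross_sq :
    ⟪d, w⟫ ^ 2 + (d 0 * w 1 - d 1 * w 0) ^ 2 = ‖d‖ ^ 2 * ‖w‖ ^ 2 := by
  rw [inner_fin_two, real_norm_sq_eq, real_norm_sq_eq, Fin.sum_univ_two, Fin.sum_univ_two]
  ring

variable {d w}

theorem neg_abs_cross_le_inner {s : Fin 2 → ℝ} (hs : ∀ i, |s i| = 1) (hd : ∀ i, 0 ≤ s i * d i)
    (hw : 0 ≤ s 0 * w 0 + s 1 * w 1) : -|d 0 * w 1 - d 1 * w 0| ≤ ⟪d, w⟫ := by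
  have hss : ∀ i, s i * s i = 1 := fun i => by rw [← abs_mul_abs_self, hs]; norm_num
  have hinner : ⟪d, w⟫ = s 0 * d 0 * (s 0 * w 0) + s 1 * d 1 * (s 1 * w 1) := by
    rw [inner_fin_two]
    linear_combination (-(d 0 * w 0)) * hss 0 - d 1 * w 1 * hss 1
  have hcross :
      |d 0 * w 1 - d 1 * w 0| = |s 0 * d 0 * (s 1 * w 1) - s 1 * d 1 * (s 0 * w 0)| := by
    rw [show s 0 * d 0 * (s 1 * w 1) - s 1 * d 1 * (s 0 * w 0)
      = s 0 * s 1 * (d 0 * w 1 - d 1 * w 0) by ring, abs_mul, abs_mul, hs, hs, one_mul, one_mul]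
  -- reflecting both vectors by `s` reduces to the first quadrant
  rw [hinner, hcross]
  exact neg_abs_sub_le_add_of_nonneg (hd 0) (hd 1) hw

theorem neg_norm_mul_norm_le_sqrt_two_mul_inner (h : -|d 0 * w 1 - d 1 * w 0| ≤ ⟪d, w⟫) :
    -(‖d‖ * ‖w‖) ≤ √2 * ⟪d, w⟫ := by
  rcases le_total 0 ⟪d, w⟫ with hP | hP
  · have := mul_nonneg (Real.sqrt_nonneg 2) hP
    have := mul_nonneg (norm_nonneg d) (norm_nonneg w)
    linarith
  · have hX := sq_le_sq' h (by linarith [abs_nonneg (d 0 * w 1 - d 1 * w 0)])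
    rw [sq_abs] at hX
    refine (abs_le_of_sq_le_sq' ?_ (by positivity)).1
    rw [mul_pow, mul_pow, Real.sq_sqrt zero_le_two, ← inner_sq_add_cross_sq]
    linarith

end EuclideanSpace

theorem applyEM_apply_zero_s15 (a f : ℝ) (c : EuclideanSpace ℝ (Fin 2)) :
    applyEM a f c 0 = c 0 - a * c 1 := by
  simp [applyEM, dotProduct, Fin.sum_univ_two]
  ring

theorem applyEM_apply_one_s15 (a f : ℝ) (c : EuclideanSpace ℝ (Fin 2)) :
    applyEM a f c 1 = c 1 - f * c 0 := by
  simp [applyEM, dotProduct, Fin.sum_univ_two]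
  ring

theorem applyEM_sub (a f : ℝ) (c c' : EuclideanSpace ℝ (Fin 2)) :
    applyEM a f c - applyEM a f c' = applyEM a f (c - c') := by
  ext i
  fin_cases i <;> simp [applyEM_apply_zero_s15, applyEM_apply_one_s15] <;> ring

theorem sign_mul_applyEM_add_nonneg {a f : ℝ} (ha : |a| ≤ 1) (hf : |f| ≤ 1)
    {s : Fin 2 → ℝ} (hs : ∀ i, |s i| = 1) {c : EuclideanSpace ℝ (Fin 2)}
    (hc : ∀ i, 0 ≤ s i * c i) :
    0 ≤ s 0 * applyEM a f c 0 + s 1 * applyEM a f c 1 := by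
  have hss : ∀ i, s i * s i = 1 := fun i => by rw [← abs_mul_abs_self, hs]; norm_num
  have hcoeff : ∀ b : ℝ, |b| ≤ 1 → 0 ≤ 1 - b * (s 0 * s 1) := fun b hb => by
    have := le_abs_self (b * (s 0 * s 1))
    rw [abs_mul, abs_mul, hs, hs, mul_one, mul_one] at this
    linarith
  rw [applyEM_apply_zero_s15, applyEM_apply_one_s15]
  linear_combination mul_nonneg (hcoeff f hf) (hc 0) + mul_nonneg (hcoeff a ha) (hc 1)
    - (f * c 0 * s 1) * hss 0 - (a * c 1 * s 0) * hss 1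

theorem neg_abs_cross_le_inner_applyEM {a f : ℝ} (ha : |a| ≤ 1) (hf : |f| ≤ 1)
    {c d : EuclideanSpace ℝ (Fin 2)} (hcd : ∀ i, 0 ≤ c i * d i) :
    -|d 0 * applyEM a f c 1 - d 1 * applyEM a f c 0| ≤ ⟪d, applyEM a f c⟫ := by
  choose s hs hsc hsd using fun i => exists_abs_eq_one_mul_nonneg (hcd i)
  exact EuclideanSpace.neg_abs_cross_le_inner hs hsd (sign_mul_applyEM_add_nonneg ha hf hs hsc)

theorem stmt_15 (aR aF : ℝ) (haR : aR ∈ Set.Ico (0 : ℝ) 1) (haF : aF ∈ Set.Ico (0 : ℝ) 1)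
    (TD : ℝ → Set ℝ) (hTD : MonotoneSetValued TD) (r : ℝ) (hr : r > 0) :
    ∀ ⦃x u y v : EuclideanSpace ℝ (Fin 2)⦄,
      u ∈ TNPNr aR aF TD r x → v ∈ TNPNr aR aF TD r y →
      (inner ℝ (x - y) (u - v) : ℝ) ≥ r * (1 - Real.sqrt 2) / 2 * ‖u - v‖ ^ 2 := by
  rintro x - y - ⟨-, ⟨u₁, hu₁, u₂, hu₂, rfl⟩, rfl⟩ ⟨-, ⟨v₁, hv₁, v₂, hv₂, rfl⟩, rfl⟩
  rw [add_sub_add_comm, applyEM_sub, ← smul_sub]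
  refine inner_add_smul_ge_of_neg_norm_mul_norm_le hr
    (EuclideanSpace.neg_norm_mul_norm_le_sqrt_two_mul_inner
      (neg_abs_cross_le_inner_applyEM (abs_le.2 ⟨by linarith [haR.1], haR.2.le⟩)
        (abs_le.2 ⟨by linarith [haF.1], haF.2.le⟩) ?_))
  refine Fin.forall_fin_two.2 ⟨?_, ?_⟩
  · simpa using hTD hu₁ hv₁
  · simpa using hTD hu₂ hv₂
end
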